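/- Let m > 0, q real, α > -1/2, and f(r) = 1 - 2m/r + q²/r² for r > 0. There exists r₀ > 0 with f(r₀) > 0 satisfying r₀·f'(r₀) ≥ (2+4α)·f(r₀) if and only if m ≥ 2|q|·√(2(1+α)(1+2α))/(3+4α). (The condition r f' ≥ (2+4α) f is equivalent to the quadratic inequality (2+4α)r² - (6+8α)m r + (4+4α)q² ≤ 0.) -/

import Mathlib

lemma RN_hasDerivAt (m q : ℝ) {r : ℝ} (hr : r ≠ 0) :
    HasDerivAt (fun r : ℝ => 1 - 2*m/r + q^2/r^2) (2*m/r^2 - 2*q^2/r^3) r := by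
  have h1 : HasDerivAt (fun x : ℝ => 2*m/x) ((0*r - 2*m*1)/r^2) r :=
    (hasDerivAt_const r (2*m)).div (hasDerivAt_id r) hr
  have h2 : HasDerivAt (fun x : ℝ => q^2/x^2) ((0*r^2 - q^2*(2*r))/(r^2)^2) r :=
    (hasDerivAt_const r (q^2)).div (by simpa using hasDerivAt_pow 2 r) (pow_ne_zero 2 hr)
  have h := ((hasDerivAt_const r (1:ℝ)).sub h1).add h2
  exact h.congr_deriv (by field_simp; ring)

set_option maxHeartbeats 1600000 in
/-- An LAGPS-k with parameter `α` (an `r`-constant surface with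
`r f'(r) ≥ (2+4α) f(r)` and `f(r) > 0`) exists in the Reissner–Nordström
spacetime exactly when the mass–charge extremality bound holds. -/
theorem stmt_9 (m q α : ℝ) (hm : m > 0) (hα : α > -1/2) :
    let f : ℝ → ℝ := fun r => 1 - 2*m/r + q^2/r^2
    (∃ r₀ : ℝ, r₀ > 0 ∧ f r₀ > 0 ∧ r₀ * deriv f r₀ ≥ (2 + 4*α) * f r₀) ↔
      m ≥ 2 * |q| * Real.sqrt (2*(1 + α)*(1 + 2*α)) / (3 + 4*α) := by
  intro f
  have h2p : (0:ℝ) < 2 + 4*α := by linarith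
  have h3p : (0:ℝ) < 3 + 4*α := by linarith
  have h1a : (0:ℝ) < 1 + α := by linarith
  have h12 : (0:ℝ) < 1 + 2*α := by linarith
  set t := Real.sqrt (2*(1 + α)*(1 + 2*α)) with ht
  have ht2 : t^2 = 2*(1 + α)*(1 + 2*α) := Real.sq_sqrt (by nlinarith)
  have ht0 : 0 ≤ t := Real.sqrt_nonneg _
  constructor
  · rintro ⟨r₀, hr₀, hf, hineq⟩
    have hne : r₀ ≠ 0 := ne_of_gt hr₀
    have hd : deriv f r₀ = 2*m/r₀^2 - 2*q^2/r₀^3 := (RN_hasDerivAt m q hne).deriv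
    rw [hd] at hineq
    have hineq' : (2 + 4*α) * (1 - 2*m/r₀ + q^2/r₀^2) ≤ r₀ * (2*m/r₀^2 - 2*q^2/r₀^3) := hineq
    have hr2 : (0:ℝ) < r₀^2 := by positivity
    have hg : (2+4*α)*r₀^2 - (6+8*α)*m*r₀ + (4+4*α)*q^2 ≤ 0 := by
      have e1 : r₀ * (2*m/r₀^2 - 2*q^2/r₀^3) * r₀^2 = 2*m*r₀ - 2*q^2 := by
        field_simp
      have e2 : ((2 + 4*α) * (1 - 2*m/r₀ + q^2/r₀^2)) * r₀^2
          = (2+4*α)*(r₀^2 - 2*m*r₀ + q^2) := by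
        field_simp
      nlinarith [mul_le_mul_of_nonneg_right hineq' hr2.le]
    have hD : 0 ≤ 4*(3+4*α)^2*m^2 - 32*(1+α)*(1+2*α)*q^2 := by
      nlinarith [sq_nonneg (2*(2+4*α)*r₀ - (6+8*α)*m),
        mul_nonpos_of_nonneg_of_nonpos h2p.le hg]
    have e : (2 * |q| * t)^2 = 8*(1+α)*(1+2*α)*q^2 := by
      rw [mul_pow, mul_pow, sq_abs, ht2]; ring
    have hle : (2 * |q| * t)^2 ≤ (m*(3+4*α))^2 := by rw [e]; nlinarith [hD]
    have h1 := Real.sqrt_le_sqrt hle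
    rw [Real.sqrt_sq (by positivity), Real.sqrt_sq (by nlinarith : (0:ℝ) ≤ m*(3+4*α))] at h1
    rw [ge_iff_le, div_le_iff₀ h3p]
    linarith
  · intro hmt
    have hmt' : 2 * |q| * t ≤ m*(3+4*α) := by
      rw [ge_iff_le, div_le_iff₀ h3p] at hmt; linarith
    have hq0 : 0 ≤ 2 * |q| * t := by positivity
    have hD : 0 ≤ 4*(3+4*α)^2*m^2 - 32*(1+α)*(1+2*α)*q^2 := by
      have e : (2 * |q| * t)^2 = 8*(1+α)*(1+2*α)*q^2 := by
        rw [mul_pow, mul_pow, sq_abs, ht2]; ring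
      nlinarith [mul_le_mul hmt' hmt' hq0 (le_trans hq0 hmt'), e]
    obtain ⟨s, hs0, hs2⟩ : ∃ s : ℝ, 0 ≤ s ∧
        s^2 = 4*(3+4*α)^2*m^2 - 32*(1+α)*(1+2*α)*q^2 :=
      ⟨Real.sqrt _, Real.sqrt_nonneg _, Real.sq_sqrt hD⟩
    have hcp : (0:ℝ) < 2*(2+4*α) := by linarith
    have h6 : 0 < (6+8*α)*m := mul_pos (by linarith) hm
    obtain ⟨r₀, hval⟩ : ∃ r₀ : ℝ, 2*(2+4*α)*r₀ = (6+8*α)*m + s :=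
      ⟨((6+8*α)*m + s)/(2*(2+4*α)), by field_simp⟩
    have hr₀ : 0 < r₀ := by nlinarith [hval, hs0, h6]
    have hne : r₀ ≠ 0 := ne_of_gt hr₀
    have key : (2*(2+4*α)*r₀ - (6+8*α)*m)^2 = s^2 := by rw [hval]; ring
    have hroot4 : 4*(2+4*α)*((2+4*α)*r₀^2 - (6+8*α)*m*r₀ + (4+4*α)*q^2) = 0 := by
      linear_combination key + hs2
    have hroot : (2+4*α)*r₀^2 - (6+8*α)*m*r₀ + (4+4*α)*q^2 = 0 := by
      rcases mul_eq_zero.mp hroot4 with h | h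
      · exact absurd h (by positivity)
      · exact h
    have hrm : m < r₀ := by nlinarith [hval, hs0, hm]
    have hnum : 0 < r₀^2 - 2*m*r₀ + q^2 := by
      have h4 : (4+4*α)*(r₀^2 - 2*m*r₀ + q^2) = 2*r₀*(r₀ - m) := by
        linear_combination hroot
      nlinarith [mul_pos hr₀ (by linarith : (0:ℝ) < r₀ - m)]
    have hfpos : (0:ℝ) < 1 - 2*m/r₀ + q^2/r₀^2 := by
      have : (1 - 2*m/r₀ + q^2/r₀^2) = (r₀^2 - 2*m*r₀ + q^2)/r₀^2 := by
        field_simp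
      rw [this]
      positivity
    refine ⟨r₀, hr₀, hfpos, ?_⟩
    have hd : deriv f r₀ = 2*m/r₀^2 - 2*q^2/r₀^3 := (RN_hasDerivAt m q hne).deriv
    rw [hd]
    show (2 + 4*α) * (1 - 2*m/r₀ + q^2/r₀^2) ≤ r₀ * (2*m/r₀^2 - 2*q^2/r₀^3)
    rw [← sub_nonneg]
    have e : r₀ * (2*m/r₀^2 - 2*q^2/r₀^3) - (2 + 4*α) * (1 - 2*m/r₀ + q^2/r₀^2)
        = -((2+4*α)*r₀^2 - (6+8*α)*m*r₀ + (4+4*α)*q^2)/r₀^2 := by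
      field_simp; ring
    rw [e, hroot]
    simp
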